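/- Let W_8 be the Wagner graph (the 8-cycle with all four antipodal pairs of vertices joined by edges, also known as the Möbius–Kantor graph V_8). Then γ(W_8) = 2. -/

import Mathlib

open Finset

/-- Z/2 boundary of a chain represented as a set of simplices. -/
def bdry {V : Type} [DecidableEq V] (c : Finset (Finset V)) : Finset (Finset V) :=
  (c.sup Finset.powerset).filter fun τ =>
    Odd ((c.filter fun σ => τ ⊆ σ ∧ τ.card + 1 = σ.card).card)

def IsChainOf {V : Type} [DecidableEq V] (K : Finset (Finset V)) (d : ℕ)
    (c : Finset (Finset V)) : Prop :=
  ∀ σ ∈ c, σ ∈ K ∧ σ.card = d + 1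

/-- Reduced simplicial Z/2-homology of the complex `K` is nonzero in dimension `d`. -/
def RedHomNonzero {V : Type} [DecidableEq V] (K : Finset (Finset V)) (d : ℕ) : Prop :=
  ∃ c : Finset (Finset V), IsChainOf K d c ∧ bdry c = ∅ ∧
    ∀ b : Finset (Finset V), IsChainOf K (d + 1) b → bdry b ≠ c

/-- The nerve of a finite family of nonempty finite sets. -/
def nerveF {V ι : Type} [DecidableEq V] [Fintype V] [Fintype ι] [DecidableEq ι]
    (F : ι → Finset V) : Finset (Finset ι) :=
  Finset.univ.filter fun σ : Finset ι => σ.Nonempty ∧ (σ.inf F).Nonempty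

/-- `F` is a connected cover in `G`: a family of (vertex sets of) induced subgraphs,
all of whose nonempty intersections induce connected subgraphs. -/
def IsConnCover {V ι : Type} [DecidableEq V] [Fintype V] [Fintype ι] [DecidableEq ι]
    (G : SimpleGraph V) (F : ι → Finset V) : Prop :=
  (∀ i, (F i).Nonempty) ∧
  ∀ σ : Finset ι, σ.Nonempty → (σ.inf F).Nonempty →
    (G.induce ((σ.inf F : Finset V) : Set V)).Connected

/-- The homological dimension of `G` is at least `d`. -/
def GammaGe {V : Type} [DecidableEq V] [Fintype V] (G : SimpleGraph V) (d : ℕ) : Prop :=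
  ∃ (n : ℕ) (F : Fin n → Finset V), IsConnCover G F ∧ RedHomNonzero (nerveF F) d

/-- The homological dimension of `G` equals the integer `m`:
`m` is the greatest `d` with `GammaGe G d` (and `m = -1` when there is none). -/
def HomDimEq {V : Type} [DecidableEq V] [Fintype V] (G : SimpleGraph V) (m : ℤ) : Prop :=
  (∀ d : ℕ, m < (d : ℤ) → ¬ GammaGe G d) ∧ (∀ d : ℕ, (d : ℤ) = m → GammaGe G d)

/-- `H` is a minor of `G`. -/
def IsMinor {W V : Type} [Fintype W] [DecidableEq W] [Fintype V] [DecidableEq V]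
    (H : SimpleGraph W) (G : SimpleGraph V) : Prop :=
  ∃ B : W → Finset V,
    (∀ w, (B w).Nonempty) ∧
    (∀ u w, u ≠ w → Disjoint (B u) (B w)) ∧
    (∀ w, (G.induce ((B w : Finset V) : Set V)).Connected) ∧
    (∀ u w, H.Adj u w → ∃ a ∈ B u, ∃ b ∈ B w, G.Adj a b)


/-- The Wagner graph `W₈`: the 8-cycle together with the four antipodal chords. -/
def wagnerGraph : SimpleGraph (Fin 8) :=
  SimpleGraph.fromRel fun i j => j - i = 1 ∨ j - i = 4

/-!
Upper bound: induct on the number of members of a connected cover `F` of `W₈`. Removing a member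
`F j` with at most six vertices changes the nerve by a cone over the nerve of the traces
`F i ∩ F j`, a connected cover of `W₈[F j]`. That graph has no `K₄` minor, so it reduces to three
vertices by deleting vertices of degree at most two and joining their neighbours; along this
reduction Mayer–Vietoris shows that such nerves have no homology above degree `1`. If every member
has seven or more vertices they all share a vertex, because deleting the neighbourhood
`{1, 4, 7}` of `0` disconnects `W₈`; the nerve is then a simplex.

Lower bound: contracting the perfect matching `{0,1}, {2,3}, {4,5}, {6,7}` of `W₈` gives `K₄`,
so the complements of the matching edges form a connected cover whose nerve is the boundary of a
tetrahedron.
-/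

open scoped symmDiff

section Chains

variable {V : Type} [DecidableEq V]

theorem mem_bdry {c : Finset (Finset V)} {τ : Finset V} :
    τ ∈ bdry c ↔ Odd #{σ ∈ c | τ ⊆ σ ∧ #τ + 1 = #σ} := by
  refine mem_filter.trans ⟨And.right, fun h => ⟨?_, h⟩⟩
  obtain ⟨σ, hσ⟩ := card_pos.mp h.pos
  rw [mem_filter] at hσ
  exact mem_sup.mpr ⟨σ, hσ.1, mem_powerset.mpr hσ.2.1⟩

@[simp]
theorem bdry_empty : bdry (∅ : Finset (Finset V)) = ∅ := by
  simp [bdry]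

theorem mem_bdry_singleton {σ τ : Finset V} : τ ∈ bdry {σ} ↔ τ ⊆ σ ∧ #τ + 1 = #σ := by
  rw [mem_bdry, filter_singleton]
  split_ifs with h <;> simp [h]

theorem Finset.odd_card_symmDiff_iff {α : Type} [DecidableEq α] (s t : Finset α) :
    Odd #(s ∆ t) ↔ ¬(Odd #s ↔ Odd #t) := by
  have hcard : #(s ∆ t) + 2 * #(s ∩ t) = #s + #t := by
    rw [← card_union_add_card_inter s t, two_mul, ← add_assoc, ← inf_eq_inter,
      ← card_union_of_disjoint (disjoint_symmDiff_inf s t), ← sup_eq_union, symmDiff_sup_inf]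
    rfl
  have := congrArg Odd hcard
  simp only [Nat.odd_add, even_two_mul, iff_true, ← Nat.not_odd_iff_even] at this
  tauto

theorem Finset.filter_symmDiff {α : Type} [DecidableEq α] (p : α → Prop) [DecidablePred p]
    (s t : Finset α) : (s ∆ t).filter p = s.filter p ∆ t.filter p := by
  ext
  simp only [mem_filter, mem_symmDiff]
  tauto

theorem bdry_symmDiff (s t : Finset (Finset V)) : bdry (s ∆ t) = bdry s ∆ bdry t := by
  ext τ
  rw [mem_symmDiff, mem_bdry, mem_bdry, mem_bdry, filter_symmDiff, odd_card_symmDiff_iff]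
  tauto

theorem Finset.filter_powerset_covBy_eq_image {τ σ : Finset V} (h : τ ⊆ σ) :
    {ρ ∈ σ.powerset | τ ⊆ ρ ∧ #τ + 1 = #ρ} = (σ \ τ).image (insert · τ) := by
  ext ρ
  simp only [mem_filter, mem_powerset, mem_image, mem_sdiff]
  constructor
  · rintro ⟨hρσ, hτρ, hcard⟩
    obtain ⟨x, hx⟩ := card_eq_one.mp (show #(ρ \ τ) = 1 by rw [card_sdiff_of_subset hτρ]; omega)
    have hxρ : x ∈ ρ \ τ := hx ▸ mem_singleton_self x
    refine ⟨x, ⟨hρσ (mem_sdiff.mp hxρ).1, (mem_sdiff.mp hxρ).2⟩, ?_⟩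
    rw [← sdiff_union_of_subset hτρ, hx, insert_eq]
  · rintro ⟨x, ⟨hxσ, hxτ⟩, rfl⟩
    exact ⟨insert_subset hxσ h, subset_insert x τ, (card_insert_of_notMem hxτ).symm⟩

theorem bdry_bdry_singleton (σ : Finset V) : bdry (bdry {σ}) = ∅ := by
  ext τ
  simp only [notMem_empty, iff_false]
  rw [mem_bdry, ← Nat.not_even_iff_odd, not_not]
  have hfaces : bdry {σ} = {ρ ∈ σ.powerset | #ρ + 1 = #σ} := by
    ext ρ
    rw [mem_bdry_singleton, mem_filter, mem_powerset]
  rw [hfaces, filter_filter]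
  -- a face `τ` of codimension two lies in exactly the two facets `insert x τ`, `x ∈ σ \ τ`
  by_cases hτ : τ ⊆ σ ∧ #σ = #τ + 2
  · rw [filter_congr (q := fun ρ => τ ⊆ ρ ∧ #τ + 1 = #ρ)
        (fun ρ _ => ⟨And.right, fun h => ⟨by omega, h⟩⟩),
      filter_powerset_covBy_eq_image hτ.1,
      card_image_of_injOn ((insert_inj_on τ).mono fun x hx => (mem_sdiff.mp (mem_coe.mp hx)).2),
      card_sdiff_of_subset hτ.1, hτ.2]
    simp
  · rw [filter_eq_empty_iff.mpr, card_empty]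
    · exact even_two_mul 0
    rintro ρ hρ ⟨hρσ, hτρ, hτρ_card⟩
    exact hτ ⟨hτρ.trans (mem_powerset.mp hρ), by omega⟩

theorem Finset.insert_eq_singleton_symmDiff {α : Type} [DecidableEq α] {a : α} {s : Finset α}
    (h : a ∉ s) : insert a s = {a} ∆ s := by
  rw [symmDiff_eq_union (disjoint_singleton_left.mpr h), insert_eq]

theorem bdry_bdry (c : Finset (Finset V)) : bdry (bdry c) = ∅ := by
  induction c using Finset.induction_on with
  | empty => simp
  | insert σ c hσ ih =>
    rw [insert_eq_singleton_symmDiff hσ, bdry_symmDiff, bdry_symmDiff, ih, bdry_bdry_singleton,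
      symmDiff_self, bot_eq_empty]

def cone (i : V) (c : Finset (Finset V)) : Finset (Finset V) :=
  {σ ∈ c | i ∉ σ}.image (insert i)

theorem mem_cone {i : V} {c : Finset (Finset V)} {ρ : Finset V} :
    ρ ∈ cone i c ↔ i ∈ ρ ∧ ρ.erase i ∈ c := by
  simp only [cone, mem_image, mem_filter]
  constructor
  · rintro ⟨σ, ⟨hσc, hiσ⟩, rfl⟩
    exact ⟨mem_insert_self i σ, by rwa [erase_insert hiσ]⟩
  · rintro ⟨hiρ, hρc⟩
    exact ⟨ρ.erase i, ⟨hρc, notMem_erase i ρ⟩, insert_erase hiρ⟩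

@[simp]
theorem cone_empty (i : V) : cone i ∅ = ∅ := by
  simp [cone]

theorem cone_symmDiff (i : V) (s t : Finset (Finset V)) :
    cone i (s ∆ t) = cone i s ∆ cone i t := by
  ext ρ
  simp only [mem_cone, mem_symmDiff]
  tauto

theorem cone_singleton (i : V) (σ : Finset V) :
    cone i {σ} = if i ∈ σ then ∅ else {insert i σ} := by
  split_ifs with h <;> simp [cone, filter_singleton, h]

theorem bdry_cone_symmDiff_cone_bdry_singleton (i : V) (σ : Finset V) :
    bdry (cone i {σ}) ∆ cone i (bdry {σ}) = {σ} := by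
  ext τ
  rw [mem_symmDiff, mem_cone, mem_bdry_singleton, mem_singleton, cone_singleton]
  by_cases hiσ : i ∈ σ
  · rw [if_pos hiσ, bdry_empty]
    constructor
    · rintro (⟨h, -⟩ | ⟨⟨hiτ, hsub, hcard⟩, -⟩)
      · exact absurd h (notMem_empty τ)
      · rw [card_erase_of_mem hiτ] at hcard
        refine eq_of_subset_of_card_le ?_ (by have := card_pos.mpr ⟨i, hiτ⟩; omega)
        rw [← insert_erase hiτ]
        exact insert_subset hiσ hsub
    · rintro rfl
      refine Or.inr ⟨⟨hiσ, erase_subset i τ, ?_⟩, notMem_empty τ⟩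
      rw [card_erase_add_one hiσ]
  · rw [if_neg hiσ, mem_bdry_singleton, card_insert_of_notMem hiσ, add_left_inj]
    by_cases hiτ : i ∈ τ
    · rw [subset_insert_iff, card_erase_of_mem hiτ]
      have := card_pos.mpr ⟨i, hiτ⟩
      constructor
      · rintro (⟨⟨hsub, hcard⟩, h⟩ | ⟨⟨-, hsub, hcard⟩, h⟩)
        · exact absurd ⟨hiτ, hsub, by omega⟩ h
        · exact absurd ⟨hsub, by omega⟩ h
      · rintro rfl
        exact absurd hiτ hiσ
    · rw [subset_insert_iff_of_notMem hiτ]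
      constructor
      · rintro (⟨⟨hsub, hcard⟩, -⟩ | ⟨⟨h, -⟩, -⟩)
        · exact eq_of_subset_of_card_le hsub hcard.ge
        · exact absurd h hiτ
      · rintro rfl
        exact Or.inl ⟨⟨subset_rfl, rfl⟩, fun h => hiτ h.1⟩

/-- `cone i` is a contracting chain homotopy: `∂ C + C ∂ = id`. -/
theorem bdry_cone_symmDiff_cone_bdry (i : V) (c : Finset (Finset V)) :
    bdry (cone i c) ∆ cone i (bdry c) = c := by
  induction c using Finset.induction_on with
  | empty => simp
  | insert σ c hσ ih =>
    rw [insert_eq_singleton_symmDiff hσ, cone_symmDiff, bdry_symmDiff, bdry_symmDiff,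
      cone_symmDiff, symmDiff_symmDiff_symmDiff_comm, ih,
      bdry_cone_symmDiff_cone_bdry_singleton]

end Chains

section Complexes

def IsDownClosed {V : Type} (K : Finset (Finset V)) : Prop :=
  ∀ σ ∈ K, ∀ τ ⊆ σ, τ.Nonempty → τ ∈ K

variable {V : Type} [DecidableEq V] {K L : Finset (Finset V)} {c : Finset (Finset V)} {d e : ℕ}

/-- `H̃_d(K; ℤ/2) = 0`. -/
def CyclesBound (K : Finset (Finset V)) (d : ℕ) : Prop :=
  ∀ c, IsChainOf K d c → bdry c = ∅ → ∃ b, IsChainOf K (d + 1) b ∧ bdry b = c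

theorem CyclesBound.not_redHomNonzero (h : CyclesBound K d) : ¬RedHomNonzero K d := by
  rintro ⟨c, hc, hcyc, hnb⟩
  obtain ⟨b, hb, rfl⟩ := h c hc hcyc
  exact hnb b hb rfl

theorem IsChainOf.symmDiff {s t : Finset (Finset V)} (hs : IsChainOf K d s)
    (ht : IsChainOf K d t) : IsChainOf K d (s ∆ t) := by
  intro σ hσ
  rcases mem_symmDiff.mp hσ with h | h
  exacts [hs σ h.1, ht σ h.1]

theorem IsChainOf.mono (hKL : K ⊆ L) (hc : IsChainOf K d c) : IsChainOf L d c :=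
  fun σ hσ => ⟨hKL (hc σ hσ).1, (hc σ hσ).2⟩

theorem IsChainOf.inter (hK : IsChainOf K d c) (hL : IsChainOf L d c) :
    IsChainOf (K ∩ L) d c :=
  fun σ hσ => ⟨mem_inter.mpr ⟨(hK σ hσ).1, (hL σ hσ).1⟩, (hK σ hσ).2⟩

theorem IsChainOf.bdry (hK : IsDownClosed K) (hc : IsChainOf K (d + 1) c) :
    IsChainOf K d (_root_.bdry c) := by
  intro τ hτ
  obtain ⟨σ, hσ⟩ := card_pos.mp (mem_bdry.mp hτ).pos
  obtain ⟨hσc, hτσ, hcard⟩ := mem_filter.mp hσ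
  have hτcard : #τ = d + 1 := by have := (hc σ hσc).2; omega
  exact ⟨hK σ (hc σ hσc).1 τ hτσ (card_pos.mp (by omega)), hτcard⟩

theorem IsChainOf.cone {i : V} (hK : ∀ σ ∈ K, insert i σ ∈ K) (hc : IsChainOf K d c) :
    IsChainOf K (d + 1) (cone i c) := by
  intro ρ hρ
  obtain ⟨σ, hσ, rfl⟩ := mem_image.mp hρ
  obtain ⟨hσc, hiσ⟩ := mem_filter.mp hσ
  exact ⟨hK σ (hc σ hσc).1, by rw [card_insert_of_notMem hiσ, (hc σ hσc).2]⟩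

theorem cyclesBound_empty (d : ℕ) : CyclesBound (∅ : Finset (Finset V)) d := by
  intro c hc _
  obtain rfl : c = ∅ := eq_empty_of_forall_notMem fun σ hσ => notMem_empty σ (hc σ hσ).1
  exact ⟨∅, fun σ h => absurd h (notMem_empty σ), bdry_empty⟩

theorem cyclesBound_of_insert_mem (i : V) (hK : ∀ σ ∈ K, insert i σ ∈ K) (d : ℕ) :
    CyclesBound K d := by
  intro c hc hcyc
  have hhom := bdry_cone_symmDiff_cone_bdry i c
  rw [hcyc, cone_empty, ← bot_eq_empty, symmDiff_bot] at hhom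
  exact ⟨cone i c, hc.cone hK, hhom⟩

/-- Mayer–Vietoris. -/
theorem CyclesBound.union (hK : IsDownClosed K) (hL : IsDownClosed L)
    (hK' : CyclesBound K (e + 1)) (hL' : CyclesBound L (e + 1)) (hKL : CyclesBound (K ∩ L) e) :
    CyclesBound (K ∪ L) (e + 1) := by
  intro c hc hcyc
  set c₁ := {σ ∈ c | σ ∈ K}
  set c₂ := {σ ∈ c | σ ∉ K}
  have hsplit : c₁ ∆ c₂ = c := by
    rw [symmDiff_eq_union (disjoint_filter_filter_not c c _), filter_union_filter_not_eq]
  have hc₁ : IsChainOf K (e + 1) c₁ := fun σ hσ =>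
    ⟨(mem_filter.mp hσ).2, (hc σ (mem_filter.mp hσ).1).2⟩
  have hc₂ : IsChainOf L (e + 1) c₂ := fun σ hσ =>
    ⟨(mem_union.mp (hc σ (mem_filter.mp hσ).1).1).resolve_left (mem_filter.mp hσ).2,
      (hc σ (mem_filter.mp hσ).1).2⟩
  have hbd : bdry c₁ = bdry c₂ := symmDiff_eq_bot.mp (by rw [← bdry_symmDiff, hsplit, hcyc]; rfl)
  obtain ⟨w, hw, hwbd⟩ :=
    hKL (bdry c₁) ((hc₁.bdry hK).inter (hbd ▸ hc₂.bdry hL)) (bdry_bdry c₁)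
  obtain ⟨b₁, hb₁, hb₁bd⟩ := hK' (c₁ ∆ w) (hc₁.symmDiff (hw.mono inter_subset_left))
    (by rw [bdry_symmDiff, hwbd, symmDiff_self]; rfl)
  obtain ⟨b₂, hb₂, hb₂bd⟩ := hL' (c₂ ∆ w) (hc₂.symmDiff (hw.mono inter_subset_right))
    (by rw [bdry_symmDiff, hwbd, hbd, symmDiff_self]; rfl)
  refine ⟨b₁ ∆ b₂, (hb₁.mono subset_union_left).symmDiff (hb₂.mono subset_union_right), ?_⟩
  rw [bdry_symmDiff, hb₁bd, hb₂bd, symmDiff_symmDiff_symmDiff_comm, symmDiff_self,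
    symmDiff_bot, hsplit]

end Complexes

section Nerves

variable {ι : Type}

def fullSimplex (T : Finset ι) : Finset (Finset ι) :=
  {σ ∈ T.powerset | σ.Nonempty}

theorem mem_fullSimplex {T σ : Finset ι} : σ ∈ fullSimplex T ↔ σ ⊆ T ∧ σ.Nonempty := by
  rw [fullSimplex, mem_filter, mem_powerset]

theorem isDownClosed_fullSimplex (T : Finset ι) : IsDownClosed (fullSimplex T) := by
  intro σ hσ τ hτσ hτ
  exact mem_fullSimplex.mpr ⟨hτσ.trans (mem_fullSimplex.mp hσ).1, hτ⟩

theorem fullSimplex_inter [DecidableEq ι] (S T : Finset ι) :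
    fullSimplex S ∩ fullSimplex T = fullSimplex (S ∩ T) := by
  ext σ
  simp only [mem_inter, mem_fullSimplex, subset_inter_iff]
  tauto

@[simp]
theorem fullSimplex_empty : fullSimplex (∅ : Finset ι) = ∅ :=
  eq_empty_of_forall_notMem fun _ hσ =>
    (mem_fullSimplex.mp hσ).2.ne_empty (subset_empty.mp (mem_fullSimplex.mp hσ).1)

theorem cyclesBound_fullSimplex [DecidableEq ι] (T : Finset ι) (d : ℕ) :
    CyclesBound (fullSimplex T) d := by
  rcases T.eq_empty_or_nonempty with rfl | ⟨i, hi⟩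
  · simpa using cyclesBound_empty d
  · refine cyclesBound_of_insert_mem i (fun σ hσ => mem_fullSimplex.mpr ?_) d
    exact ⟨insert_subset hi (mem_fullSimplex.mp hσ).1, insert_nonempty i σ⟩

theorem isDownClosed_biUnion [DecidableEq ι] {β : Type} {S : Finset β} {K : β → Finset (Finset ι)}
    (hK : ∀ v ∈ S, IsDownClosed (K v)) : IsDownClosed (S.biUnion K) := by
  intro σ hσ τ hτσ hτ
  obtain ⟨v, hv, hσv⟩ := mem_biUnion.mp hσ
  exact mem_biUnion.mpr ⟨v, hv, hK v hv σ hσv τ hτσ hτ⟩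

theorem cyclesBound_biUnion_fullSimplex [DecidableEq ι] {β : Type} [DecidableEq β] (S : Finset β)
    (T : β → Finset ι) (d : ℕ) (hS : #S ≤ d + 1) :
    CyclesBound (S.biUnion fun v => fullSimplex (T v)) d := by
  induction S using Finset.induction_on generalizing T d with
  | empty => simpa using cyclesBound_empty d
  | insert v S hv ih =>
    rw [card_insert_of_notMem hv] at hS
    rw [biUnion_insert]
    cases d with
    | zero =>
      rw [card_eq_zero.mp (by omega : #S = 0), biUnion_empty, union_empty]
      exact cyclesBound_fullSimplex _ 0
    | succ e =>
      refine (cyclesBound_fullSimplex _ _).union (isDownClosed_fullSimplex _)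
        (isDownClosed_biUnion fun w _ => isDownClosed_fullSimplex _) (ih T (e + 1) (by omega)) ?_
      simp_rw [inter_biUnion, fullSimplex_inter]
      exact ih _ e (by omega)

variable {V : Type} [Fintype V] [DecidableEq V] {F : ι → Finset V} {D : Finset ι}

def nerveOn (F : ι → Finset V) (D : Finset ι) : Finset (Finset ι) :=
  {σ ∈ D.powerset | σ.Nonempty ∧ (σ.inf F).Nonempty}

theorem mem_nerveOn {σ : Finset ι} :
    σ ∈ nerveOn F D ↔ σ ⊆ D ∧ σ.Nonempty ∧ (σ.inf F).Nonempty := by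
  rw [nerveOn, mem_filter, mem_powerset]

theorem nerveF_eq_nerveOn_univ [DecidableEq ι] [Fintype ι] (F : ι → Finset V) :
    nerveF F = nerveOn F univ := by
  ext σ
  simp [nerveF, mem_nerveOn]

theorem isDownClosed_nerveOn (F : ι → Finset V) (D : Finset ι) : IsDownClosed (nerveOn F D) := by
  intro σ hσ τ hτσ hτ
  obtain ⟨hσD, -, hσF⟩ := mem_nerveOn.mp hσ
  exact mem_nerveOn.mpr ⟨hτσ.trans hσD, hτ, hσF.mono (inf_mono hτσ)⟩

theorem nerveOn_mono {D' : Finset ι} (h : D' ⊆ D) : nerveOn F D' ⊆ nerveOn F D := by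
  intro σ hσ
  obtain ⟨hσD, hσ⟩ := mem_nerveOn.mp hσ
  exact mem_nerveOn.mpr ⟨hσD.trans h, hσ⟩

theorem subset_filter_mem_iff {σ : Finset ι} {v : V} :
    σ ⊆ {i ∈ D | v ∈ F i} ↔ σ ⊆ D ∧ v ∈ σ.inf F := by
  simp only [subset_iff, mem_filter, mem_inf]
  exact ⟨fun h => ⟨fun i hi => (h hi).1, fun i hi => (h hi).2⟩,
    fun h i hi => ⟨h.1 hi, h.2 i hi⟩⟩

theorem nerveOn_eq_fullSimplex (h : (D.inf F).Nonempty) : nerveOn F D = fullSimplex D := by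
  ext σ
  rw [mem_nerveOn, mem_fullSimplex]
  exact ⟨fun hσ => ⟨hσ.1, hσ.2.1⟩, fun hσ => ⟨hσ.1, hσ.2, h.mono (inf_mono hσ.1)⟩⟩

theorem nerveOn_eq_biUnion [DecidableEq ι] {A : Finset V} (hA : ∀ i ∈ D, F i ⊆ A) :
    nerveOn F D = A.biUnion fun v => fullSimplex {i ∈ D | v ∈ F i} := by
  ext σ
  simp only [mem_nerveOn, mem_biUnion, mem_fullSimplex, subset_filter_mem_iff]
  constructor
  · rintro ⟨hσD, ⟨i, hi⟩, v, hv⟩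
    exact ⟨v, hA i (hσD hi) (mem_inf.mp hv i hi), ⟨hσD, hv⟩, i, hi⟩
  · rintro ⟨v, -, ⟨hσD, hv⟩, hσ⟩
    exact ⟨hσD, hσ, v, hv⟩

def nerveStar [DecidableEq ι] (F : ι → Finset V) (D : Finset ι) (j : ι) : Finset (Finset ι) :=
  {σ ∈ nerveOn F D | insert j σ ∈ nerveOn F D}

theorem isDownClosed_nerveStar [DecidableEq ι] (j : ι) : IsDownClosed (nerveStar F D j) := by
  intro σ hσ τ hτσ hτ
  obtain ⟨hσN, hjσN⟩ := mem_filter.mp hσ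
  exact mem_filter.mpr ⟨isDownClosed_nerveOn F D σ hσN τ hτσ hτ,
    isDownClosed_nerveOn F D _ hjσN _ (insert_subset_insert j hτσ) (insert_nonempty j τ)⟩

theorem cyclesBound_nerveStar [DecidableEq ι] (j : ι) (d : ℕ) :
    CyclesBound (nerveStar F D j) d := by
  refine cyclesBound_of_insert_mem j (fun σ hσ => ?_) d
  have hjσ := (mem_filter.mp hσ).2
  exact mem_filter.mpr ⟨hjσ, by rwa [insert_idem]⟩

theorem nerveOn_eq_nerveStar_union [DecidableEq ι] {j : ι} (hj : j ∈ D) :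
    nerveOn F D = nerveStar F D j ∪ nerveOn F (D.erase j) := by
  refine Subset.antisymm (fun σ hσ => ?_)
    (union_subset (filter_subset _ _) (nerveOn_mono (erase_subset j D)))
  obtain ⟨hσD, hσ⟩ := mem_nerveOn.mp hσ
  by_cases hjσ : j ∈ σ
  · have hjσN : insert j σ ∈ nerveOn F D := by
      rw [insert_eq_of_mem hjσ]
      exact mem_nerveOn.mpr ⟨hσD, hσ⟩
    exact mem_union_left _ (mem_filter.mpr ⟨mem_nerveOn.mpr ⟨hσD, hσ⟩, hjσN⟩)
  · refine mem_union_right _ (mem_nerveOn.mpr ⟨fun i hi => mem_erase.mpr ⟨?_, hσD hi⟩, hσ⟩)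
    rintro rfl
    exact hjσ hi

theorem Finset.inf_inf_const {α β : Type} [Lattice α] [OrderTop α] {s : Finset β}
    (hs : s.Nonempty) (f : β → α) (a : α) : s.inf (fun i => f i ⊓ a) = s.inf f ⊓ a :=
  inf_inf.trans (congrArg (s.inf f ⊓ ·) (inf_const hs a))

theorem inf_inter_eq_inf_insert [DecidableEq ι] {σ : Finset ι} (hσ : σ.Nonempty) (j : ι) :
    σ.inf (fun i => F i ∩ F j) = (insert j σ).inf F :=
  (inf_inf_const hσ F (F j)).trans (by rw [inf_insert, inf_comm])

theorem nerveStar_inter_nerveOn_erase [DecidableEq ι] {j : ι} (hj : j ∈ D) :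
    nerveStar F D j ∩ nerveOn F (D.erase j) = nerveOn (fun i => F i ∩ F j) (D.erase j) := by
  ext σ
  simp only [nerveStar, mem_inter, mem_filter, mem_nerveOn]
  constructor
  · rintro ⟨⟨-, -, -, hjσ⟩, hσD, hσ, -⟩
    exact ⟨hσD, hσ, by rwa [inf_inter_eq_inf_insert hσ]⟩
  · rintro ⟨hσD, hσ, hσF⟩
    rw [inf_inter_eq_inf_insert hσ] at hσF
    have hσD' := hσD.trans (erase_subset j D)
    have hσF' := hσF.mono (inf_mono (subset_insert j σ))
    exact ⟨⟨⟨hσD', hσ, hσF'⟩, insert_subset hj hσD', insert_nonempty j σ, hσF⟩, hσD, hσ, hσF'⟩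

end Nerves

section Connectivity

variable {V : Type} {G : SimpleGraph V} {s : Finset V}

def ConnectedOn (G : SimpleGraph V) (s : Finset V) : Prop :=
  ∀ t ⊆ s, t.Nonempty → (∀ x ∈ t, ∀ y ∈ s, G.Adj x y → y ∈ t) → s ⊆ t

theorem connectedOn_empty : ConnectedOn G ∅ :=
  fun _ ht hne _ => absurd (subset_empty.mp ht ▸ hne) Finset.not_nonempty_empty

theorem connectedOn_singleton (a : V) : ConnectedOn G {a} :=
  fun t ht hne _ => by rw [(subset_singleton_iff.mp ht).resolve_left hne.ne_empty]

theorem connectedOn_iff_preconnected :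
    ConnectedOn G s ↔ (G.induce (s : Set V)).Preconnected := by
  classical
  constructor
  · rintro h ⟨u, hu⟩ ⟨v, hv⟩
    let t := {x ∈ s | ∃ hx : x ∈ s, (G.induce (s : Set V)).Reachable ⟨u, hu⟩ ⟨x, hx⟩}
    have hclosed : ∀ x ∈ t, ∀ y ∈ s, G.Adj x y → y ∈ t := by
      intro x hx y hy hxy
      obtain ⟨-, hx, hux⟩ := mem_filter.mp hx
      exact mem_filter.mpr ⟨hy, hy, hux.trans (SimpleGraph.Adj.reachable (G := G.induce _) hxy)⟩
    obtain ⟨-, _, huv⟩ := mem_filter.mp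
      (h t (filter_subset _ s) ⟨u, mem_filter.mpr ⟨hu, hu, .rfl⟩⟩ hclosed hv)
    exact huv
  · intro h t hts ⟨u, hu⟩ hclosed v hv
    have key : ∀ y, Relation.ReflTransGen (G.induce (s : Set V)).Adj ⟨u, hts hu⟩ y → y.1 ∈ t := by
      intro y hy
      induction hy with
      | refl => exact hu
      | tail _ hyz ih => exact hclosed _ ih _ (mem_coe.mp (Subtype.prop _)) hyz
    exact key ⟨v, hv⟩ ((SimpleGraph.reachable_iff_reflTransGen _ _).mp (h _ _))

theorem ConnectedOn.exists_adj {a b : V} (h : ConnectedOn G s) (ha : a ∈ s) (hb : b ∈ s)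
    (hab : a ≠ b) : ∃ w ∈ s, G.Adj a w := by
  by_contra! hno
  refine hab (mem_singleton.mp (h {a} (singleton_subset_iff.mpr ha) (singleton_nonempty a)
    (fun x hx y hy hxy => ?_) hb)).symm
  rw [mem_singleton.mp hx] at hxy
  exact absurd hxy (hno y hy)

def joinNeighbours (G : SimpleGraph V) (a : V) : SimpleGraph V :=
  G ⊔ SimpleGraph.fromRel fun u v => G.Adj a u ∧ G.Adj a v

instance [DecidableEq V] [DecidableRel G.Adj] (a : V) : DecidableRel (joinNeighbours G a).Adj :=
  inferInstanceAs (DecidableRel (G ⊔ _).Adj)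

theorem ConnectedOn.erase_joinNeighbours [DecidableEq V] (h : ConnectedOn G s) (a : V) :
    ConnectedOn (joinNeighbours G a) (s.erase a) := by
  classical
  intro t hts hne hclosed
  -- adding `a` back to `t` when it has a neighbour there gives a closed subset of `s`
  let t' := t ∪ {x ∈ s | x = a ∧ ∃ z ∈ t, G.Adj a z}
  suffices hs : s ⊆ t' by
    intro x hx
    obtain ⟨hxa, hxs⟩ := mem_erase.mp hx
    exact (mem_union.mp (hs hxs)).resolve_right fun h => hxa (mem_filter.mp h).2.1
  refine h t' (union_subset (hts.trans (erase_subset a s)) (filter_subset _ s))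
    (hne.mono subset_union_left) fun x hx y hy hxy => ?_
  by_cases hya : y = a
  · subst hya
    rcases mem_union.mp hx with hxt | hxa
    · exact mem_union_right _ (mem_filter.mpr ⟨hy, rfl, x, hxt, hxy.symm⟩)
    · exact absurd ((mem_filter.mp hxa).2.1 ▸ hxy) G.irrefl
  · refine mem_union_left _ ?_
    have hy' : y ∈ s.erase a := mem_erase.mpr ⟨hya, hy⟩
    rcases mem_union.mp hx with hxt | hxa
    · exact hclosed x hxt y hy' (Or.inl hxy)
    · obtain ⟨-, rfl, z, hzt, hz⟩ := mem_filter.mp hxa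
      by_cases hzy : z = y
      · exact hzy ▸ hzt
      · exact hclosed z hzt y hy' (Or.inr ⟨hzy, Or.inl ⟨hz, hxy⟩⟩)

theorem ConnectedOn.union [DecidableEq V] {s' : Finset V} (hs : ConnectedOn G s)
    (hs' : ConnectedOn G s') (hadj : ∃ x ∈ s, ∃ y ∈ s', G.Adj x y) : ConnectedOn G (s ∪ s') := by
  obtain ⟨x, hx, y, hy, hxy⟩ := hadj
  intro t hts hne hclosed
  have hpart : ∀ {r}, ConnectedOn G r → r ⊆ s ∪ s' → (t ∩ r).Nonempty → r ⊆ t :=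
    fun hr hrss hne => (hr _ inter_subset_right hne fun a ha b hb hab =>
      mem_inter.mpr ⟨hclosed a (mem_inter.mp ha).1 b (hrss hb) hab, hb⟩).trans inter_subset_left
  have hs_t : (t ∩ s).Nonempty → s ⊆ t := hpart hs subset_union_left
  have hs'_t : (t ∩ s').Nonempty → s' ⊆ t := hpart hs' subset_union_right
  obtain ⟨z, hz⟩ := hne
  rcases mem_union.mp (hts hz) with hzs | hzs'
  · have hst := hs_t ⟨z, mem_inter.mpr ⟨hz, hzs⟩⟩
    have hyt := hclosed x (hst hx) y (mem_union_right s hy) hxy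
    exact union_subset hst (hs'_t ⟨y, mem_inter.mpr ⟨hyt, hy⟩⟩)
  · have hs't := hs'_t ⟨z, mem_inter.mpr ⟨hz, hzs'⟩⟩
    have hxt := hclosed y (hs't hy) x (mem_union_left s' hx) hxy.symm
    exact union_subset (hs_t ⟨x, mem_inter.mpr ⟨hxt, hx⟩⟩) hs't

theorem connectedOn_pair [DecidableEq V] {a b : V} (h : G.Adj a b) : ConnectedOn G {a, b} := by
  rw [insert_eq]
  exact (connectedOn_singleton a).union (connectedOn_singleton b) ⟨a, mem_singleton_self a, b,
    mem_singleton_self b, h⟩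

theorem connectedOn_biUnion [DecidableEq V] {κ : Type} [DecidableEq κ] {I : Finset κ}
    {P : κ → Finset V} (hP : ∀ i ∈ I, ConnectedOn G (P i))
    (hadj : ∀ i ∈ I, ∀ j ∈ I, i ≠ j → ∃ x ∈ P i, ∃ y ∈ P j, G.Adj x y) :
    ConnectedOn G (I.biUnion P) := by
  induction I using Finset.induction_on with
  | empty => simpa using connectedOn_empty
  | insert i I hi ih =>
    rw [biUnion_insert]
    have hI : ConnectedOn G (I.biUnion P) :=
      ih (fun k hk => hP k (mem_insert_of_mem hk)) fun k hk l hl =>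
        hadj k (mem_insert_of_mem hk) l (mem_insert_of_mem hl)
    rcases I.eq_empty_or_nonempty with rfl | ⟨j, hj⟩
    · simpa using hP i (mem_insert_self i ∅)
    · obtain ⟨x, hx, y, hy, hxy⟩ := hadj i (mem_insert_self i I) j (mem_insert_of_mem hj)
        (by rintro rfl; exact hi hj)
      exact (hP i (mem_insert_self i I)).union hI ⟨x, hx, y, mem_biUnion.mpr ⟨j, hj, hy⟩, hxy⟩

end Connectivity

section Covers

variable {ι V : Type} [Fintype V] [DecidableEq V] {G : SimpleGraph V} {F : ι → Finset V}
  {D : Finset ι}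

def IsConnCoverOn (G : SimpleGraph V) (F : ι → Finset V) (D : Finset ι) : Prop :=
  ∀ σ ⊆ D, σ.Nonempty → ConnectedOn G (σ.inf F)

theorem IsConnCover.isConnCoverOn_univ [Fintype ι] [DecidableEq ι] (h : IsConnCover G F) :
    IsConnCoverOn G F univ := by
  intro σ _ hσ
  rcases (σ.inf F).eq_empty_or_nonempty with hempty | hne
  · exact hempty ▸ connectedOn_empty
  · exact connectedOn_iff_preconnected.mpr (h.2 σ hσ hne).preconnected

theorem IsConnCoverOn.mono {D' : Finset ι} (h : IsConnCoverOn G F D) (hD : D' ⊆ D) :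
    IsConnCoverOn G F D' :=
  fun σ hσD hσ => h σ (hσD.trans hD) hσ

theorem IsConnCoverOn.link [DecidableEq ι] {j : ι} (h : IsConnCoverOn G F D) (hj : j ∈ D) :
    IsConnCoverOn G (fun i => F i ∩ F j) (D.erase j) := by
  intro σ hσD hσ
  rw [inf_inter_eq_inf_insert hσ]
  exact h _ (insert_subset hj (hσD.trans (erase_subset j D))) (insert_nonempty j σ)

theorem inf_erase_eq_erase_inf {σ : Finset ι} (hσ : σ.Nonempty) (a : V) :
    σ.inf (fun i => (F i).erase a) = (σ.inf F).erase a := by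
  simp only [erase_eq, sdiff_eq]
  exact inf_inf_const hσ F _

theorem IsConnCoverOn.erase_joinNeighbours (h : IsConnCoverOn G F D) (a : V) :
    IsConnCoverOn (joinNeighbours G a) (fun i => (F i).erase a) D := by
  intro σ hσD hσ
  rw [inf_erase_eq_erase_inf hσ]
  exact (h σ hσD hσ).erase_joinNeighbours a

/-- Without a common vertex, the members missing the vertices of `T` would be the sets `{t}ᶜ`,
meeting in the disconnected set `Tᶜ`. -/
theorem IsConnCoverOn.inf_nonempty (hF : IsConnCoverOn G F D) {T : Finset V} (hT : T.Nonempty)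
    (hcut : ¬ConnectedOn G Tᶜ) (hbig : ∀ j ∈ D, Fintype.card V ≤ #(F j) + 1) :
    (D.inf F).Nonempty := by
  classical
  by_contra hempty
  have hmiss : ∀ v, ∃ j ∈ D, F j = {v}ᶜ := by
    intro v
    obtain ⟨j, hj, hvj⟩ : ∃ j ∈ D, v ∉ F j := by
      by_contra! h
      exact hempty ⟨v, mem_inf.mpr h⟩
    refine ⟨j, hj, eq_of_subset_of_card_le (fun x hx => ?_) ?_⟩
    · rw [mem_compl, mem_singleton]
      rintro rfl
      exact hvj hx
    · rw [card_compl, card_singleton]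
      have := hbig j hj
      omega
  choose f hfD hf using hmiss
  apply hcut
  have hinf : (T.image f).inf F = Tᶜ := by
    ext x
    simp [inf_image, mem_inf, hf]
  rw [← hinf]
  exact hF _ (fun i hi => by obtain ⟨t, -, rfl⟩ := mem_image.mp hi; exact hfD t) (hT.image f)

variable [DecidableEq ι]

theorem nerveOn_eq_fullSimplex_union_nerveOn_erase (a : V) :
    nerveOn F D = fullSimplex {i ∈ D | a ∈ F i} ∪ nerveOn (fun i => (F i).erase a) D := by
  ext σ
  rw [mem_union, mem_nerveOn, mem_fullSimplex, subset_filter_mem_iff, mem_nerveOn]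
  constructor
  · rintro ⟨hσD, hσ, v, hv⟩
    by_cases ha : a ∈ σ.inf F
    · exact Or.inl ⟨⟨hσD, ha⟩, hσ⟩
    · refine Or.inr ⟨hσD, hσ, v, ?_⟩
      rw [inf_erase_eq_erase_inf hσ]
      exact mem_erase.mpr ⟨by rintro rfl; exact ha hv, hv⟩
  · rintro (⟨⟨hσD, ha⟩, hσ⟩ | ⟨hσD, hσ, hF⟩)
    · exact ⟨hσD, hσ, a, ha⟩
    · rw [inf_erase_eq_erase_inf hσ] at hF
      exact ⟨hσD, hσ, hF.mono (erase_subset a _)⟩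

/-- A connected intersection containing `a` and another vertex contains a neighbour of `a`. -/
theorem fullSimplex_inter_nerveOn_erase {A N : Finset V} {a : V} (hF : IsConnCoverOn G F D)
    (hA : ∀ i ∈ D, F i ⊆ A) (hN : ∀ v, v ∈ N ↔ v ∈ A ∧ G.Adj a v) :
    fullSimplex {i ∈ D | a ∈ F i} ∩ nerveOn (fun i => (F i).erase a) D =
      N.biUnion fun v => fullSimplex ({i ∈ D | a ∈ F i} ∩ {i ∈ D | v ∈ F i}) := by
  ext σ
  simp only [mem_inter, mem_biUnion, mem_fullSimplex, mem_nerveOn, subset_inter_iff,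
    subset_filter_mem_iff, hN]
  constructor
  · rintro ⟨⟨⟨hσD, ha⟩, hσ⟩, -, -, hσF⟩
    rw [inf_erase_eq_erase_inf hσ] at hσF
    obtain ⟨b, hb⟩ := hσF
    obtain ⟨hba, hb⟩ := mem_erase.mp hb
    obtain ⟨w, hw, haw⟩ := (hF σ hσD hσ).exists_adj ha hb (Ne.symm hba)
    obtain ⟨i, hi⟩ := hσ
    exact ⟨w, ⟨hA i (hσD hi) (mem_inf.mp hw i hi), haw⟩, ⟨⟨hσD, ha⟩, hσD, hw⟩, i, hi⟩
  · rintro ⟨v, ⟨-, hav⟩, ⟨⟨hσD, ha⟩, -, hv⟩, hσ⟩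
    refine ⟨⟨⟨hσD, ha⟩, hσ⟩, hσD, hσ, ?_⟩
    rw [inf_erase_eq_erase_inf hσ]
    exact ⟨v, mem_erase.mpr ⟨hav.ne.symm, hv⟩⟩

end Covers

section Reduction

variable {V : Type} [DecidableEq V]

/-- The series–parallel reduction: it succeeds exactly when `G[A]` has no `K₄` minor. -/
inductive DegTwoReducible : SimpleGraph V → Finset V → Prop
  | of_card_le {G : SimpleGraph V} {A : Finset V} : #A ≤ 3 → DegTwoReducible G A
  | erase {G : SimpleGraph V} {A : Finset V} {a : V} : a ∈ A →
      (open Classical in #{v ∈ A | G.Adj a v} ≤ 2) →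
      DegTwoReducible (joinNeighbours G a) (A.erase a) → DegTwoReducible G A

def degTwoReducibleCheck (G : SimpleGraph V) [DecidableRel G.Adj] : ℕ → Finset V → Bool
  | 0, A => #A ≤ 3
  | k + 1, A => #A ≤ 3 || decide (∃ a ∈ A, #{v ∈ A | G.Adj a v} ≤ 2 ∧
      degTwoReducibleCheck (joinNeighbours G a) k (A.erase a))

theorem degTwoReducible_of_check {G : SimpleGraph V} [DecidableRel G.Adj] {k : ℕ}
    {A : Finset V} (h : degTwoReducibleCheck G k A = true) : DegTwoReducible G A := by
  induction k generalizing G A with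
  | zero => exact .of_card_le (by simpa [degTwoReducibleCheck] using h)
  | succ k ih =>
    simp only [degTwoReducibleCheck, Bool.or_eq_true, decide_eq_true_eq] at h
    rcases h with h | ⟨a, ha, hdeg, hrec⟩
    · exact .of_card_le h
    · exact .erase ha (by convert hdeg) (ih hrec)

variable [Fintype V] {ι : Type} [DecidableEq ι] {G : SimpleGraph V} {A : Finset V}

theorem DegTwoReducible.cyclesBound_nerveOn (h : DegTwoReducible G A) {D : Finset ι}
    {F : ι → Finset V} (hA : ∀ i ∈ D, F i ⊆ A) (hF : IsConnCoverOn G F D) (e : ℕ) :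
    CyclesBound (nerveOn F D) (e + 2) := by
  classical
  induction h generalizing F with
  | of_card_le hA3 =>
    rw [nerveOn_eq_biUnion hA]
    exact cyclesBound_biUnion_fullSimplex _ _ _ (by omega)
  | @erase G A a ha hdeg _ ih =>
    rw [nerveOn_eq_fullSimplex_union_nerveOn_erase a]
    refine (cyclesBound_fullSimplex _ _).union (isDownClosed_fullSimplex _)
      (isDownClosed_nerveOn _ _)
      (ih (fun i hi => erase_subset_erase a (hA i hi)) (hF.erase_joinNeighbours a)) ?_
    rw [fullSimplex_inter_nerveOn_erase hF hA (N := {v ∈ A | G.Adj a v}) fun v => mem_filter]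
    exact cyclesBound_biUnion_fullSimplex _ _ _ (by omega)

theorem cyclesBound_nerveOn_add_three
    (hred : ∀ A : Finset V, #A + 2 ≤ Fintype.card V → DegTwoReducible G A) {T : Finset V}
    (hT : T.Nonempty) (hcut : ¬ConnectedOn G Tᶜ) (F : ι → Finset V) (D : Finset ι)
    (hF : IsConnCoverOn G F D) (d : ℕ) : CyclesBound (nerveOn F D) (d + 3) := by
  induction D using Finset.strongInduction with
  | H D ih =>
  by_cases hsmall : ∃ j ∈ D, #(F j) + 2 ≤ Fintype.card V
  · obtain ⟨j, hj, hjcard⟩ := hsmall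
    rw [nerveOn_eq_nerveStar_union hj]
    refine (cyclesBound_nerveStar j _).union (isDownClosed_nerveStar j) (isDownClosed_nerveOn _ _)
      (ih _ (erase_ssubset hj) (hF.mono (erase_subset j D))) ?_
    rw [nerveStar_inter_nerveOn_erase hj]
    exact (hred _ hjcard).cyclesBound_nerveOn (fun i _ => inter_subset_right) (hF.link hj) d
  · simp only [not_exists, not_and, not_le] at hsmall
    rw [nerveOn_eq_fullSimplex (hF.inf_nonempty hT hcut fun j hj => by
      have := hsmall j hj; omega)]
    exact cyclesBound_fullSimplex D _

end Reduction

section Wagner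

instance : DecidableRel wagnerGraph.Adj :=
  inferInstanceAs (DecidableRel (SimpleGraph.fromRel _).Adj)

theorem wagnerGraph_degTwoReducible (A : Finset (Fin 8)) (hA : #A + 2 ≤ Fintype.card (Fin 8)) :
    DegTwoReducible wagnerGraph A := by
  have hcheck : ∀ A : Finset (Fin 8), #A ≤ 6 → degTwoReducibleCheck wagnerGraph 3 A = true := by
    set_option maxRecDepth 100000 in decide
  exact degTwoReducible_of_check (hcheck A (by simpa using hA))

/-- `0` is isolated in the complement of its neighbourhood `{1, 4, 7}`. -/
theorem not_connectedOn_wagnerGraph : ¬ConnectedOn wagnerGraph {1, 4, 7}ᶜ := fun h =>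
  absurd (h {0} (by decide) (singleton_nonempty 0) (by decide) (show (2 : Fin 8) ∈ _ by decide))
    (by decide)

theorem not_gammaGe_wagnerGraph {d : ℕ} (hd : 3 ≤ d) : ¬GammaGe wagnerGraph d := by
  rintro ⟨n, F, hF, hne⟩
  obtain ⟨e, rfl⟩ := Nat.exists_eq_add_of_le' hd
  rw [nerveF_eq_nerveOn_univ] at hne
  exact (cyclesBound_nerveOn_add_three wagnerGraph_degTwoReducible (T := {1, 4, 7}) (by decide)
    not_connectedOn_wagnerGraph F univ hF.isConnCoverOn_univ e).not_redHomNonzero hne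

def wagnerMatching : Fin 4 → Finset (Fin 8) :=
  ![{0, 1}, {2, 3}, {4, 5}, {6, 7}]

def wagnerCover (i : Fin 4) : Finset (Fin 8) :=
  (wagnerMatching i)ᶜ

theorem isConnCover_wagnerCover : IsConnCover wagnerGraph wagnerCover := by
  have hinf : ∀ σ : Finset (Fin 4), σ.inf wagnerCover = σᶜ.biUnion wagnerMatching := by decide
  have hedge : ∀ i, ConnectedOn wagnerGraph (wagnerMatching i) := by
    intro i
    fin_cases i <;> exact connectedOn_pair (by decide)
  have hadj : ∀ i j : Fin 4, i ≠ j →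
      ∃ x ∈ wagnerMatching i, ∃ y ∈ wagnerMatching j, wagnerGraph.Adj x y := by
    decide
  refine ⟨by decide, fun σ _ hσ => ?_⟩
  have := hσ.coe_sort
  refine ⟨connectedOn_iff_preconnected.mp ?_⟩
  rw [hinf]
  exact connectedOn_biUnion (fun i _ => hedge i) fun i _ j _ => hadj i j

theorem redHomNonzero_nerveF_wagnerCover : RedHomNonzero (nerveF wagnerCover) 2 := by
  refine ⟨univ.powersetCard 3, by unfold IsChainOf; decide, by decide, fun b hb => ?_⟩
  obtain rfl : b = ∅ := eq_empty_of_forall_notMem fun σ hσ => by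
    have hσ' := hb σ hσ
    rw [eq_univ_of_card σ hσ'.2] at hσ'
    exact absurd hσ'.1 (by decide)
  rw [bdry_empty]
  decide

end Wagner

/-- the homological dimension of the Wagner graph is 2. -/
theorem stmt10 : HomDimEq wagnerGraph 2 := by
  refine ⟨fun d hd => not_gammaGe_wagnerGraph (by omega), fun d hd => ?_⟩
  obtain rfl : d = 2 := by omega
  exact ⟨4, wagnerCover, isConnCover_wagnerCover, redHomNonzero_nerveF_wagnerCover⟩
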